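/- arXiv:2509.00566 — 2 statements merged into one kernel-verified Lean document; each statement's English description precedes it below -/
import Mathlib

section
/- Let f: D → R^4 be a branched immersion with a single branch point at 0 of branching order N−1, i.e. f(z) = (Re(z^N) + o₁(|z|^N), Im(z^N) + o₁(|z|^N), o₁(|z|^N), o₁(|z|^N)). Then the Gauss map of f, defined on D \ {0} by z ↦ T_{f(z)}f(D) ∈ G₂⁺(R^4), extends continuously to 0 with value the oriented plane R² × {0} spanned by the first two coordinates. -/
/- STATEMENT 16: For a branched immersion
f(z) = (Re(z^N)+o₁(|z|^N), Im(z^N)+o₁(|z|^N), o₁(|z|^N), o₁(|z|^N))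
with a single branch point of branching order N−1 at 0, the Gauss map
z ↦ T_{f(z)}f(D) ∈ G₂⁺(ℝ⁴) (the normalized 2-vector ∂ₓf ∧ ∂_y f / ‖∂ₓf ∧ ∂_y f‖)
extends continuously to 0 with value the oriented plane ℝ²×{0} = e₁∧e₂. -/

noncomputable section

open Complex Filter

abbrev E4 := EuclideanSpace ℝ (Fin 4)
abbrev Lambda2R4 := EuclideanSpace ℝ (Fin 6)

/-- Wedge product of vectors of ℝ⁴, in the basis e₁∧e₂, e₁∧e₃, e₁∧e₄, e₂∧e₃, e₂∧e₄, e₃∧e₄. -/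
def wedge (u v : E4) : Lambda2R4 :=
  (WithLp.equiv 2 (Fin 6 → ℝ)).symm
    ![u 0 * v 1 - u 1 * v 0, u 0 * v 2 - u 2 * v 0, u 0 * v 3 - u 3 * v 0,
      u 1 * v 2 - u 2 * v 1, u 1 * v 3 - u 3 * v 1, u 2 * v 3 - u 3 * v 2]

/-- the principal part (Re z^N, Im z^N, 0, 0) of the branched immersion -/
def principal (N : ℕ) : Fin 4 → ℂ → ℝ :=
  ![fun z => (z ^ N).re, fun z => (z ^ N).im, fun _ => 0, fun _ => 0]

/-- x-derivative vector -/
def fdx (f : ℂ → E4) (z : ℂ) : E4 :=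
  (WithLp.equiv 2 (Fin 4 → ℝ)).symm (fun i => fderiv ℝ (fun w => f w i) z 1)

/-- y-derivative vector -/
def fdy (f : ℂ → E4) (z : ℂ) : E4 :=
  (WithLp.equiv 2 (Fin 4 → ℝ)).symm (fun i => fderiv ℝ (fun w => f w i) z Complex.I)

lemma wedge_apply_five (u v : E4) : wedge u v 5 = u 2 * v 3 - u 3 * v 2 := rfl

lemma bdd_mul_null {l : Filter ℂ} {u v : ℂ → ℝ} (hu : ∀ᶠ z in l, |u z| ≤ 1)
    (hv : Tendsto v l (nhds 0)) : Tendsto (fun z => u z * v z) l (nhds 0) := by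
  apply squeeze_zero_norm' (a := fun z => |v z|)
  · filter_upwards [hu] with z hz
    calc ‖u z * v z‖ = |u z| * |v z| := abs_mul _ _
      _ ≤ 1 * |v z| := mul_le_mul_of_nonneg_right hz (abs_nonneg _)
      _ = |v z| := one_mul _
  · simpa using hv.abs

lemma null_mul_null {l : Filter ℂ} {u v : ℂ → ℝ} (hu : Tendsto u l (nhds 0))
    (hv : Tendsto v l (nhds 0)) : Tendsto (fun z => u z * v z) l (nhds 0) := by
  simpa using hu.mul hv


set_option maxHeartbeats 1000000 in
theorem gauss_map_extends_continuously
    (N : ℕ) (hN : 2 ≤ N) (f : ℂ → E4)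
    (hdiff : ∀ i : Fin 4, Differentiable ℝ (fun z => f z i))
    -- the remainders h i = f i − principal part are o₁(|z|^N):
    (ho : ∀ i : Fin 4, Tendsto (fun z : ℂ => (f z i - principal N i z) / ‖z‖ ^ N)
        (nhdsWithin 0 {0}ᶜ) (nhds 0))
    (ho' : ∀ i : Fin 4, Tendsto
        (fun z : ℂ => ‖fderiv ℝ (fun w => f w i - principal N i w) z‖ / ‖z‖ ^ (N - 1))
        (nhdsWithin 0 {0}ᶜ) (nhds 0)) :
    -- the Gauss map: the unit 2-vector ∂ₓf ∧ ∂_y f / ‖·‖ tends to e₁∧e₂ at the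
    -- branch point
    Tendsto (fun z : ℂ =>
        (let fx : E4 := (WithLp.equiv 2 (Fin 4 → ℝ)).symm
            (fun i => fderiv ℝ (fun w => f w i) z 1)
         let fy : E4 := (WithLp.equiv 2 (Fin 4 → ℝ)).symm
            (fun i => fderiv ℝ (fun w => f w i) z Complex.I)
         ‖wedge fx fy‖⁻¹ • wedge fx fy))
      (nhdsWithin 0 {0}ᶜ)
      (nhds (EuclideanSpace.single (0 : Fin 6) (1 : ℝ))) := by
  show Tendsto (fun z : ℂ => ‖wedge (fdx f z) (fdy f z)‖⁻¹ • wedge (fdx f z) (fdy f z))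
      (nhdsWithin 0 {0}ᶜ) (nhds (EuclideanSpace.single (0 : Fin 6) (1 : ℝ)))
  have hNpos : (0:ℝ) < (N:ℝ) := by
    have : 0 < N := by omega
    exact_mod_cast this
  set L := nhdsWithin (0:ℂ) {0}ᶜ with hL
  set c : ℂ → ℂ := fun z => (N:ℂ) * z^(N-1) with hc
  set s : ℂ → ℝ := fun z => ((N:ℝ) * ‖z‖^(N-1))⁻¹ with hs
  set D : Fin 4 → ℂ → ℂ →L[ℝ] ℝ :=
    fun i z => fderiv ℝ (fun w => f w i - principal N i w) z with hD
  -- differentiability of principal parts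
  have hdp : ∀ i : Fin 4, Differentiable ℝ (principal N i) := by
    intro i
    fin_cases i
    · exact Complex.reCLM.differentiable.comp ((differentiable_pow (𝕜 := ℂ) N).restrictScalars ℝ)
    · exact Complex.imCLM.differentiable.comp ((differentiable_pow (𝕜 := ℂ) N).restrictScalars ℝ)
    · exact differentiable_const _
    · exact differentiable_const _
  -- fderiv of the principal parts
  have hre : ∀ z v : ℂ, fderiv ℝ (fun w : ℂ => (w ^ N).re) z v = (c z * v).re := by
    intro z v
    have h1 : HasFDerivAt (fun w : ℂ => w ^ N)
        ((ContinuousLinearMap.smulRight (1 : ℂ →L[ℂ] ℂ) ((N:ℂ) * z^(N-1))).restrictScalars ℝ) z :=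
      ((hasDerivAt_pow N z).hasFDerivAt).restrictScalars ℝ
    have h2 : HasFDerivAt (fun w : ℂ => (w ^ N).re)
        (Complex.reCLM.comp ((ContinuousLinearMap.smulRight (1 : ℂ →L[ℂ] ℂ)
          ((N:ℂ) * z^(N-1))).restrictScalars ℝ)) z :=
      (Complex.reCLM.hasFDerivAt).comp z h1
    rw [h2.fderiv]
    simp [hc, mul_comm]
  have him : ∀ z v : ℂ, fderiv ℝ (fun w : ℂ => (w ^ N).im) z v = (c z * v).im := by
    intro z v
    have h1 : HasFDerivAt (fun w : ℂ => w ^ N)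
        ((ContinuousLinearMap.smulRight (1 : ℂ →L[ℂ] ℂ) ((N:ℂ) * z^(N-1))).restrictScalars ℝ) z :=
      ((hasDerivAt_pow N z).hasFDerivAt).restrictScalars ℝ
    have h2 : HasFDerivAt (fun w : ℂ => (w ^ N).im)
        (Complex.imCLM.comp ((ContinuousLinearMap.smulRight (1 : ℂ →L[ℂ] ℂ)
          ((N:ℂ) * z^(N-1))).restrictScalars ℝ)) z :=
      (Complex.imCLM.hasFDerivAt).comp z h1
    rw [h2.fderiv]
    simp [hc, mul_comm]
  -- decomposition of the full derivative
  have hfd : ∀ (i : Fin 4) (z v : ℂ), fderiv ℝ (fun w => f w i) z v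
      = fderiv ℝ (principal N i) z v + D i z v := by
    intro i z v
    have h := fderiv_sub (hdiff i z) ((hdp i) z)
    have : D i z = fderiv ℝ (fun w => f w i) z - fderiv ℝ (principal N i) z := by
      rw [hD]; exact h
    rw [this]
    simp
  -- the eight component formulas
  have hP0 : ∀ z : ℂ, fderiv ℝ (fun w => f w 0) z 1 = (c z).re + D 0 z 1 := by
    intro z
    rw [hfd 0 z 1, show principal N 0 = (fun w : ℂ => (w^N).re) from rfl, hre z 1, mul_one]
  have hP1 : ∀ z : ℂ, fderiv ℝ (fun w => f w 1) z 1 = (c z).im + D 1 z 1 := by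
    intro z
    rw [hfd 1 z 1, show principal N 1 = (fun w : ℂ => (w^N).im) from rfl, him z 1, mul_one]
  have hP2 : ∀ z : ℂ, fderiv ℝ (fun w => f w 2) z 1 = D 2 z 1 := by
    intro z
    rw [hfd 2 z 1, show principal N 2 = (fun _ : ℂ => (0:ℝ)) from rfl]
    simp
  have hP3 : ∀ z : ℂ, fderiv ℝ (fun w => f w 3) z 1 = D 3 z 1 := by
    intro z
    rw [hfd 3 z 1, show principal N 3 = (fun _ : ℂ => (0:ℝ)) from rfl]
    simp
  have hQ0 : ∀ z : ℂ, fderiv ℝ (fun w => f w 0) z Complex.I = -(c z).im + D 0 z Complex.I := by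
    intro z
    rw [hfd 0 z Complex.I, show principal N 0 = (fun w : ℂ => (w^N).re) from rfl, hre z Complex.I,
      Complex.mul_I_re]
  have hQ1 : ∀ z : ℂ, fderiv ℝ (fun w => f w 1) z Complex.I = (c z).re + D 1 z Complex.I := by
    intro z
    rw [hfd 1 z Complex.I, show principal N 1 = (fun w : ℂ => (w^N).im) from rfl, him z Complex.I,
      Complex.mul_I_im]
  have hQ2 : ∀ z : ℂ, fderiv ℝ (fun w => f w 2) z Complex.I = D 2 z Complex.I := by
    intro z
    rw [hfd 2 z Complex.I, show principal N 2 = (fun _ : ℂ => (0:ℝ)) from rfl]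
    simp
  have hQ3 : ∀ z : ℂ, fderiv ℝ (fun w => f w 3) z Complex.I = D 3 z Complex.I := by
    intro z
    rw [hfd 3 z Complex.I, show principal N 3 = (fun _ : ℂ => (0:ℝ)) from rfl]
    simp
  -- basic facts about s and c
  have hspos : ∀ z : ℂ, z ≠ 0 → 0 < s z := by
    intro z hz
    have : (0:ℝ) < ‖z‖ := norm_pos_iff.2 hz
    rw [hs]
    positivity
  have habs : ∀ z : ℂ, z ≠ 0 → s z * ‖c z‖ = 1 := by
    intro z hz
    have hzn : (0:ℝ) < ‖z‖ := norm_pos_iff.2 hz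
    have h1 : ‖c z‖ = (N:ℝ) * ‖z‖^(N-1) := by
      simp [hc, map_mul, map_pow, Complex.norm_natCast]
    rw [hs, h1]
    rw [inv_mul_cancel₀ (by positivity)]
  have hab1 : ∀ z : ℂ, z ≠ 0 → (s z * (c z).re)^2 + (s z * (c z).im)^2 = 1 := by
    intro z hz
    have h0 := habs z hz
    have h2 : (c z).re^2 + (c z).im^2 = ‖c z‖ ^ 2 := by
      rw [Complex.sq_norm, Complex.normSq_apply]; ring
    have e : (s z * (c z).re)^2 + (s z * (c z).im)^2
        = (s z)^2 * ((c z).re^2 + (c z).im^2) := by ring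
    rw [e, h2, ← mul_pow, h0, one_pow]
  have hA1 : ∀ᶠ z in L, |s z * (c z).re| ≤ 1 := by
    filter_upwards [self_mem_nhdsWithin] with z hz
    have h := hab1 z hz
    rw [← sq_le_one_iff_abs_le_one]
    nlinarith [sq_nonneg (s z * (c z).im)]
  have hB1 : ∀ᶠ z in L, |s z * (c z).im| ≤ 1 := by
    filter_upwards [self_mem_nhdsWithin] with z hz
    have h := hab1 z hz
    rw [← sq_le_one_iff_abs_le_one]
    nlinarith [sq_nonneg (s z * (c z).re)]
  -- the error terms tend to zero
  have herr : ∀ (v : ℂ), ‖v‖ = 1 → ∀ i : Fin 4,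
      Tendsto (fun z => s z * D i z v) L (nhds 0) := by
    intro v hv i
    apply squeeze_zero_norm' (a := fun z => (N:ℝ)⁻¹ * (‖D i z‖ / ‖z‖^(N-1)))
    · filter_upwards [self_mem_nhdsWithin] with z hz
      replace hz : z ≠ 0 := hz
      have hzn : (0:ℝ) < ‖z‖ := norm_pos_iff.2 hz
      have h1 : ‖(D i z) v‖ ≤ ‖D i z‖ := by
        simpa [hv] using (D i z).le_opNorm v
      have h2 : ‖s z * (D i z) v‖ = s z * ‖(D i z) v‖ := by
        rw [norm_mul, Real.norm_of_nonneg (le_of_lt (hspos z hz))]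
      rw [h2]
      have h3 : s z * ‖(D i z) v‖ ≤ s z * ‖D i z‖ :=
        mul_le_mul_of_nonneg_left h1 (le_of_lt (hspos z hz))
      have h4 : s z * ‖D i z‖ = (N:ℝ)⁻¹ * (‖D i z‖ / ‖z‖^(N-1)) := by
        simp only [hs]; rw [mul_inv, div_eq_mul_inv]; ring
      rw [← h4]; exact h3
    · have h := (ho' i).const_mul ((N:ℝ)⁻¹)
      simpa [hD] using h
  have hpt : ∀ i : Fin 4, Tendsto (fun z => s z * D i z 1) L (nhds 0) :=
    herr 1 (by simp)
  have hqt : ∀ i : Fin 4, Tendsto (fun z => s z * D i z Complex.I) L (nhds 0) :=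
    herr Complex.I (by simp)

  -- the six component limits
  have key0 : Tendsto (fun z => ((s z)^2 • wedge (fdx f z) (fdy f z)) 0) L (nhds 1) := by
    have T : Tendsto (fun z => 1 +
        ((s z * (c z).re) * (s z * D 1 z Complex.I)
         + (s z * (c z).re) * (s z * D 0 z 1)
         + (s z * D 0 z 1) * (s z * D 1 z Complex.I)
         - (s z * (c z).im) * (s z * D 0 z Complex.I)
         + (s z * (c z).im) * (s z * D 1 z 1)
         - (s z * D 1 z 1) * (s z * D 0 z Complex.I))) L (nhds 1) := by
      have h := (((((bdd_mul_null hA1 (hqt 1)).add (bdd_mul_null hA1 (hpt 0))).add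
          (null_mul_null (hpt 0) (hqt 1))).sub (bdd_mul_null hB1 (hqt 0))).add
          (bdd_mul_null hB1 (hpt 1))).sub (null_mul_null (hpt 1) (hqt 0))
      have h2 := (tendsto_const_nhds (x := (1:ℝ)) (f := L)).add h
      simpa using h2
    refine Tendsto.congr' ?_ T
    filter_upwards [self_mem_nhdsWithin] with z hz
    have hab := hab1 z hz
    simp only [wedge, fdx, fdy, PiLp.smul_apply, smul_eq_mul, WithLp.equiv_symm_apply, PiLp.toLp_apply,
      Matrix.cons_val_zero, Matrix.cons_val_one, Matrix.head_cons]
    rw [hP0 z, hP1 z, hQ0 z, hQ1 z]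
    linear_combination (-1 : ℝ) * hab
  have key1 : Tendsto (fun z => ((s z)^2 • wedge (fdx f z) (fdy f z)) 1) L (nhds 0) := by
    have T : Tendsto (fun z =>
        (s z * (c z).re) * (s z * D 2 z Complex.I)
         + (s z * D 0 z 1) * (s z * D 2 z Complex.I)
         + (s z * (c z).im) * (s z * D 2 z 1)
         - (s z * D 2 z 1) * (s z * D 0 z Complex.I)) L (nhds 0) := by
      have h := (((bdd_mul_null hA1 (hqt 2)).add (null_mul_null (hpt 0) (hqt 2))).add
          (bdd_mul_null hB1 (hpt 2))).sub (null_mul_null (hpt 2) (hqt 0))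
      simpa using h
    refine Tendsto.congr' ?_ T
    filter_upwards [self_mem_nhdsWithin] with z hz
    simp only [wedge, fdx, fdy, PiLp.smul_apply, smul_eq_mul, WithLp.equiv_symm_apply, PiLp.toLp_apply,
      Matrix.cons_val_zero, Matrix.cons_val_one, Matrix.head_cons, Matrix.cons_val_two,
      Matrix.tail_cons]
    rw [hP0 z, hP2 z, hQ0 z, hQ2 z]
    ring
  have key2 : Tendsto (fun z => ((s z)^2 • wedge (fdx f z) (fdy f z)) 2) L (nhds 0) := by
    have T : Tendsto (fun z =>
        (s z * (c z).re) * (s z * D 3 z Complex.I)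
         + (s z * D 0 z 1) * (s z * D 3 z Complex.I)
         + (s z * (c z).im) * (s z * D 3 z 1)
         - (s z * D 3 z 1) * (s z * D 0 z Complex.I)) L (nhds 0) := by
      have h := (((bdd_mul_null hA1 (hqt 3)).add (null_mul_null (hpt 0) (hqt 3))).add
          (bdd_mul_null hB1 (hpt 3))).sub (null_mul_null (hpt 3) (hqt 0))
      simpa using h
    refine Tendsto.congr' ?_ T
    filter_upwards [self_mem_nhdsWithin] with z hz
    simp only [wedge, fdx, fdy, PiLp.smul_apply, smul_eq_mul, WithLp.equiv_symm_apply, PiLp.toLp_apply,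
      Matrix.cons_val_zero, Matrix.cons_val_one, Matrix.head_cons, Matrix.cons_val_two,
      Matrix.cons_val_three, Matrix.tail_cons]
    rw [hP0 z, hP3 z, hQ0 z, hQ3 z]
    ring
  have key3 : Tendsto (fun z => ((s z)^2 • wedge (fdx f z) (fdy f z)) 3) L (nhds 0) := by
    have T : Tendsto (fun z =>
        (s z * (c z).im) * (s z * D 2 z Complex.I)
         + (s z * D 1 z 1) * (s z * D 2 z Complex.I)
         - (s z * (c z).re) * (s z * D 2 z 1)
         - (s z * D 2 z 1) * (s z * D 1 z Complex.I)) L (nhds 0) := by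
      have h := (((bdd_mul_null hB1 (hqt 2)).add (null_mul_null (hpt 1) (hqt 2))).sub
          (bdd_mul_null hA1 (hpt 2))).sub (null_mul_null (hpt 2) (hqt 1))
      simpa using h
    refine Tendsto.congr' ?_ T
    filter_upwards [self_mem_nhdsWithin] with z hz
    simp only [wedge, fdx, fdy, PiLp.smul_apply, smul_eq_mul, WithLp.equiv_symm_apply, PiLp.toLp_apply,
      Matrix.cons_val_zero, Matrix.cons_val_one, Matrix.head_cons, Matrix.cons_val_two,
      Matrix.cons_val_three, Matrix.tail_cons]
    rw [hP1 z, hP2 z, hQ1 z, hQ2 z]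
    ring
  have key4 : Tendsto (fun z => ((s z)^2 • wedge (fdx f z) (fdy f z)) 4) L (nhds 0) := by
    have T : Tendsto (fun z =>
        (s z * (c z).im) * (s z * D 3 z Complex.I)
         + (s z * D 1 z 1) * (s z * D 3 z Complex.I)
         - (s z * (c z).re) * (s z * D 3 z 1)
         - (s z * D 3 z 1) * (s z * D 1 z Complex.I)) L (nhds 0) := by
      have h := (((bdd_mul_null hB1 (hqt 3)).add (null_mul_null (hpt 1) (hqt 3))).sub
          (bdd_mul_null hA1 (hpt 3))).sub (null_mul_null (hpt 3) (hqt 1))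
      simpa using h
    refine Tendsto.congr' ?_ T
    filter_upwards [self_mem_nhdsWithin] with z hz
    simp only [wedge, fdx, fdy, PiLp.smul_apply, smul_eq_mul, WithLp.equiv_symm_apply, PiLp.toLp_apply,
      Matrix.cons_val_zero, Matrix.cons_val_one, Matrix.head_cons, Matrix.cons_val_two,
      Matrix.cons_val_three, Matrix.cons_val_four, Matrix.tail_cons]
    rw [hP1 z, hP3 z, hQ1 z, hQ3 z]
    ring
  have key5 : Tendsto (fun z => ((s z)^2 • wedge (fdx f z) (fdy f z)) 5) L (nhds 0) := by
    have T : Tendsto (fun z =>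
        (s z * D 2 z 1) * (s z * D 3 z Complex.I)
         - (s z * D 3 z 1) * (s z * D 2 z Complex.I)) L (nhds 0) := by
      have h := (null_mul_null (hpt 2) (hqt 3)).sub (null_mul_null (hpt 3) (hqt 2))
      simpa using h
    refine Tendsto.congr' ?_ T
    filter_upwards [self_mem_nhdsWithin] with z hz
    simp only [wedge_apply_five, PiLp.smul_apply, smul_eq_mul]
    simp only [fdx, fdy, WithLp.equiv_symm_apply, PiLp.toLp_apply]
    rw [hP2 z, hP3 z, hQ2 z, hQ3 z]
    ring
  -- assemble componentwise convergence
  have hGt : Tendsto (fun z => (s z)^2 • wedge (fdx f z) (fdy f z)) L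
      (nhds (EuclideanSpace.single (0:Fin 6) (1:ℝ))) := by
    have h1 : Tendsto (fun z => (WithLp.equiv 2 (Fin 6 → ℝ)) ((s z)^2 • wedge (fdx f z) (fdy f z)))
        L (nhds (Pi.single (0:Fin 6) (1:ℝ))) := by
      rw [tendsto_pi_nhds]
      intro j
      fin_cases j
      · simpa using key0
      · simpa using key1
      · simpa using key2
      · simpa using key3
      · simpa using key4
      · simpa using key5
    have h2 := (PiLp.continuous_toLp 2 (fun _ : Fin 6 => ℝ)).continuousAt.tendsto.comp h1
    have e : (WithLp.equiv 2 (Fin 6 → ℝ)).symm (Pi.single (0:Fin 6) (1:ℝ))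
        = EuclideanSpace.single (0:Fin 6) (1:ℝ) := rfl
    rw [← e]
    exact h2
  -- normalize
  have hfinal : Tendsto (fun z =>
      ‖(s z)^2 • wedge (fdx f z) (fdy f z)‖⁻¹ • ((s z)^2 • wedge (fdx f z) (fdy f z))) L
      (nhds (EuclideanSpace.single (0:Fin 6) (1:ℝ))) := by
    have hcont : ContinuousAt (fun w : Lambda2R4 => ‖w‖⁻¹ • w)
        (EuclideanSpace.single (0:Fin 6) (1:ℝ)) :=
      ContinuousAt.smul ((continuous_norm.continuousAt).inv₀
        (by simp [EuclideanSpace.norm_single])) continuousAt_id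
    have h := hcont.tendsto.comp hGt
    have e1 : ‖EuclideanSpace.single (0:Fin 6) (1:ℝ)‖ = 1 := by simp [EuclideanSpace.norm_single]
    rw [e1, inv_one, one_smul] at h
    exact h
  refine Tendsto.congr' ?_ hfinal
  filter_upwards [self_mem_nhdsWithin] with z hz
  have hsz := hspos z hz
  rw [norm_smul, smul_smul]
  congr 1
  rw [Real.norm_of_nonneg (by positivity), mul_inv]
  rcases eq_or_ne (‖wedge (fdx f z) (fdy f z)‖) 0 with h | h
  · simp [h]
  · field_simp

end
end

section
/- Let Σ₀ be a branched surface near p consisting of m disks branched at p with branching orders N_i − 1 (i = 1,...,m), and let (Σ_n) be surfaces converging to Σ₀ with uniform bounds so that the tangent fallout k^T = (1/2π) lim_{ε→0} lim_{n→∞} ∫_{Σ_n^ε} K^T is defined. Then k^T = 2 − Σ_{i=1}^m (N_i + 1) − 2 lim_{ε→0} lim_{n→∞} g(Σ_n^ε), where g(Σ_n^ε) is the genus of Σ_n ∩ B(p,ε). In particular k^T ≤ 2 − Σ(N_i+1) ≤ 0 and k^T < 0 unless m = 1 and N₁ = 1. -/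
/- STATEMENT 17 (tangent fallout formula): with Σₙ^ε = Σₙ ∩ B(p,ε), Gauss–Bonnet
∫_{Σₙ^ε} K^T = 2πχ(Σₙ^ε) − ∫_{∂Σₙ^ε} k_g, χ = 2 − 2g − m (m boundary
components), and the boundary limit ∫ k_g → 2π ΣNᵢ, the tangent fallout
k^T = (1/2π) lim_{ε→0} lim_{n→∞} ∫_{Σₙ^ε} K^T satisfies
k^T = 2 − Σ(Nᵢ+1) − 2 lim lim g(Σₙ^ε); in particular k^T ≤ 2 − Σ(Nᵢ+1) ≤ 0 and
k^T < 0 unless m = 1 and N₁ = 1. -/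

open Filter Real

theorem tangent_fallout_formula
    (m : ℕ) (hm : 1 ≤ m) (N : Fin m → ℕ) (hN : ∀ i, 1 ≤ N i)
    -- χ ε n, g ε n: Euler characteristic and genus of Σₙ^ε;
    -- Kint ε n = ∫_{Σₙ^ε} K^T ; Igeo ε n = ∫_{∂Σₙ^ε} k_g
    (χ : ℝ → ℕ → ℤ) (g : ℝ → ℕ → ℕ) (Kint Igeo : ℝ → ℕ → ℝ)
    -- Gauss–Bonnet with boundary
    (hGB : ∀ ε n, Kint ε n = 2 * π * (χ ε n : ℝ) - Igeo ε n)
    -- Σₙ^ε has genus g ε n and m boundary components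
    (hχ : ∀ ε n, (χ ε n : ℝ) = 2 - 2 * (g ε n : ℝ) - m)
    -- the iterated limits (first n → ∞, then ε → 0⁺):
    (Ilim glim Klim : ℝ → ℝ) (G kT : ℝ)
    (hIn : ∀ ε, Tendsto (Igeo ε) atTop (nhds (Ilim ε)))
    -- ∂Σ₀^ε is asymptotic to m circles of multiplicities Nᵢ
    (hIε : Tendsto Ilim (nhdsWithin 0 (Set.Ioi 0)) (nhds (2 * π * ∑ i, (N i : ℝ))))
    (hgn : ∀ ε, Tendsto (fun n => (g ε n : ℝ)) atTop (nhds (glim ε)))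
    (hgε : Tendsto glim (nhdsWithin 0 (Set.Ioi 0)) (nhds G))
    (hKn : ∀ ε, Tendsto (Kint ε) atTop (nhds (Klim ε)))
    -- k^T = (1/2π) lim_{ε→0} lim_{n→∞} ∫ K^T
    (hKε : Tendsto Klim (nhdsWithin 0 (Set.Ioi 0)) (nhds (2 * π * kT))) :
    kT = 2 - (∑ i, ((N i : ℝ) + 1)) - 2 * G ∧
    kT ≤ 2 - ∑ i, ((N i : ℝ) + 1) ∧
    (2 - ∑ i, ((N i : ℝ) + 1)) ≤ 0 ∧
    (¬(m = 1 ∧ ∀ i, N i = 1) → kT < 0) := by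
  have hπ : (0:ℝ) < 2 * π := by positivity
  -- Step 1: Klim ε = 2π(2 - 2 glim ε - m) - Ilim ε for every ε
  have hK : ∀ ε, Klim ε = 2 * π * (2 - 2 * glim ε - m) - Ilim ε := by
    intro ε
    have h1 : Tendsto (Kint ε) atTop
        (nhds (2 * π * (2 - 2 * glim ε - m) - Ilim ε)) := by
      have : Tendsto (fun n => 2 * π * (2 - 2 * (g ε n : ℝ) - m) - Igeo ε n)
          atTop (nhds (2 * π * (2 - 2 * glim ε - m) - Ilim ε)) :=
        (((tendsto_const_nhds.sub ((hgn ε).const_mul 2)).sub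
            tendsto_const_nhds).const_mul (2 * π)).sub (hIn ε)
      refine this.congr fun n => ?_
      rw [hGB, hχ]
    exact tendsto_nhds_unique (hKn ε) h1
  -- Step 2: pass to the limit ε → 0⁺
  have hne : (nhdsWithin (0:ℝ) (Set.Ioi 0)).NeBot := nhdsGT_neBot 0
  have h2 : Tendsto Klim (nhdsWithin 0 (Set.Ioi 0))
      (nhds (2 * π * (2 - 2 * G - m) - 2 * π * ∑ i, (N i : ℝ))) := by
    have : Tendsto (fun ε => 2 * π * (2 - 2 * glim ε - m) - Ilim ε)
        (nhdsWithin 0 (Set.Ioi 0))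
        (nhds (2 * π * (2 - 2 * G - m) - 2 * π * ∑ i, (N i : ℝ))) :=
      (((tendsto_const_nhds.sub (hgε.const_mul 2)).sub
          tendsto_const_nhds).const_mul (2 * π)).sub hIε
    exact this.congr fun ε => (hK ε).symm
  have hkey : 2 * π * kT = 2 * π * (2 - 2 * G - m) - 2 * π * ∑ i, (N i : ℝ) :=
    tendsto_nhds_unique hKε h2
  have hsum : (∑ i, ((N i : ℝ) + 1)) = (∑ i, (N i : ℝ)) + m := by
    rw [Finset.sum_add_distrib]
    simp
  have hkT : kT = 2 - (∑ i, ((N i : ℝ) + 1)) - 2 * G := by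
    have hπ' : (2 * π) ≠ 0 := ne_of_gt hπ
    field_simp at hkey
    rw [hsum]
    nlinarith [pi_pos, hkey]
  -- G ≥ 0
  have hg0 : ∀ ε, 0 ≤ glim ε := fun ε =>
    ge_of_tendsto (hgn ε) (Eventually.of_forall fun n => by positivity)
  have hG : 0 ≤ G := ge_of_tendsto hgε (Eventually.of_forall hg0)
  -- sum bound: ∑ (N i + 1) ≥ 2 m
  have hsum2 : (2 * m : ℝ) ≤ ∑ i, ((N i : ℝ) + 1) := by
    calc (2 * m : ℝ) = ∑ _i : Fin m, (2:ℝ) := by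
          simp [mul_comm]
      _ ≤ ∑ i, ((N i : ℝ) + 1) := by
          apply Finset.sum_le_sum
          intro i _
          have := hN i
          have : (1:ℝ) ≤ N i := by exact_mod_cast this
          linarith
  have hm' : (1:ℝ) ≤ m := by exact_mod_cast hm
  refine ⟨hkT, by linarith, by linarith, ?_⟩
  intro hnot
  -- strict bound: ∑ (N i + 1) > 2
  have hstrict : (2:ℝ) < ∑ i, ((N i : ℝ) + 1) := by
    by_cases h1 : m = 1
    · subst h1
      have hN0 : N 0 ≠ 1 := by
        intro h
        exact hnot ⟨rfl, fun i => by fin_cases i; exact h⟩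
      have hN1 := hN 0
      have : 2 ≤ N 0 := by omega
      have : (2:ℝ) ≤ N 0 := by exact_mod_cast this
      rw [show (Finset.univ : Finset (Fin 1)) = {0} from rfl]
      simp only [Finset.sum_singleton]
      linarith
    · have : 2 ≤ m := by omega
      have : (2:ℝ) ≤ m := by exact_mod_cast this
      linarith
  linarith
end
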